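/- Let n, p be positive integers, A a real n×n matrix, B₁, B₂ real n×p matrices, and 0 < h < T reals. Set B = B₁ + exp(−h·A)·B₂ and G_T = ∫_0^{T−h} exp((T−t)A)·B·Bᵀ·exp((T−t)Aᵀ) dt + ∫_{T−h}^{T} exp((T−t)A)·B₁·B₁ᵀ·exp((T−t)Aᵀ) dt. Suppose G_T is invertible. For y ∈ ℝⁿ define u : ℝ → ℝᵖ by u(t) = Bᵀ·exp((T−t)Aᵀ)·G_T⁻¹·y for t ∈ [0, T−h] and u(t) = B₁ᵀ·exp((T−t)Aᵀ)·G_T⁻¹·y for t ∈ (T−h, T]. Then ∫_0^{T−h} exp((T−t)A)·B·u(t) dt + ∫_{T−h}^{T} exp((T−t)A)·B₁·u(t) dt = y. -/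

import Mathlib

/-!
On each of the two intervals the control is `u(t) = Cᵀ e^{(T-t)Aᵀ} v` with `v = G_T⁻¹ y`, so
pulling the constant vector `v` out of the integral turns `∫ e^{(T-t)A} C u(t) dt` into the
corresponding piece of the Gramian applied to `v`. Summing the two pieces gives
`G_T G_T⁻¹ y = y`.
-/

open Matrix MeasureTheory intervalIntegral

attribute [local instance] Matrix.linftyOpNormedAddCommGroup Matrix.linftyOpNormedSpace
attribute [local instance] Matrix.linftyOpNormedRing Matrix.linftyOpNormedAlgebra

theorem intervalIntegral_mulVec {m k : Type*} [Fintype m] [Fintype k]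
    {f : ℝ → Matrix m k ℝ} (hf : Continuous f) (a b : ℝ) (v : k → ℝ) :
    ∫ t in a..b, f t *ᵥ v = (∫ t in a..b, f t) *ᵥ v :=
  (LinearMap.toContinuousLinearMap ((mulVecBilin ℝ ℝ).flip v)).intervalIntegral_comp_comm
    (hf.intervalIntegrable a b)

theorem integral_mul_mulVec_eq_gramian_mulVec {m k : Type*} [Fintype m] [Fintype k]
    {E E' : ℝ → Matrix m m ℝ} (hE : Continuous E) (hE' : Continuous E')
    (C : Matrix m k ℝ) (v : m → ℝ) {u : ℝ → k → ℝ} {a b : ℝ}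
    (hu : ∀ t ∈ Set.uIoc a b, u t = Cᵀ *ᵥ (E' t *ᵥ v)) :
    ∫ t in a..b, (E t * C) *ᵥ u t = (∫ t in a..b, E t * C * Cᵀ * E' t) *ᵥ v := by
  rw [← intervalIntegral_mulVec (by fun_prop) a b]
  refine integral_congr_ae (Filter.Eventually.of_forall fun t ht => ?_)
  simp only [hu t ht, mulVec_mulVec, Matrix.mul_assoc]

theorem continuous_exp_sub_smul {m : Type*} [Fintype m] [DecidableEq m] (A : Matrix m m ℝ)
    (T : ℝ) : Continuous fun t : ℝ => NormedSpace.exp ((T - t) • A) :=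
  NormedSpace.exp_continuous.comp (by fun_prop)

theorem delay_steering_control_general
    {n p : ℕ}
    (A : Matrix (Fin n) (Fin n) ℝ) (B₁ : Matrix (Fin n) (Fin p) ℝ)
    (h T : ℝ) (hh : 0 < h) (hhT : h < T)
    (B : Matrix (Fin n) (Fin p) ℝ)
    (G : Matrix (Fin n) (Fin n) ℝ)
    (hG : G = (∫ t in (0:ℝ)..(T - h),
          NormedSpace.exp ((T - t) • A) * B * Bᵀ * NormedSpace.exp ((T - t) • Aᵀ))
        + ∫ t in (T - h)..T,
          NormedSpace.exp ((T - t) • A) * B₁ * B₁ᵀ * NormedSpace.exp ((T - t) • Aᵀ))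
    (hGunit : IsUnit G)
    (y : Fin n → ℝ) (u : ℝ → Fin p → ℝ)
    (hu₁ : ∀ t ∈ Set.Icc (0:ℝ) (T - h),
      u t = Bᵀ.mulVec ((NormedSpace.exp ((T - t) • Aᵀ)).mulVec (G⁻¹.mulVec y)))
    (hu₂ : ∀ t ∈ Set.Ioc (T - h) T,
      u t = B₁ᵀ.mulVec ((NormedSpace.exp ((T - t) • Aᵀ)).mulVec (G⁻¹.mulVec y))) :
    (∫ t in (0:ℝ)..(T - h), (NormedSpace.exp ((T - t) • A) * B).mulVec (u t))
      + (∫ t in (T - h)..T, (NormedSpace.exp ((T - t) • A) * B₁).mulVec (u t)) = y := by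
  have hE := continuous_exp_sub_smul A T
  have hE' := continuous_exp_sub_smul Aᵀ T
  have h₁ := integral_mul_mulVec_eq_gramian_mulVec hE hE' B _ (a := 0) (b := T - h) fun t ht =>
    hu₁ t (Set.Ioc_subset_Icc_self (by rwa [Set.uIoc_of_le (by linarith)] at ht))
  have h₂ := integral_mul_mulVec_eq_gramian_mulVec hE hE' B₁ _ (a := T - h) (b := T) fun t ht =>
    hu₂ t (by rwa [Set.uIoc_of_le (by linarith)] at ht)
  beta_reduce at h₁ h₂
  rw [h₁, h₂, ← add_mulVec, ← hG, mulVec_mulVec,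
    mul_nonsing_inv G ((isUnit_iff_isUnit_det G).mp hGunit), one_mulVec]

/-- The adjoint-based steering control `u = L* G_T⁻¹ y` steers the delay system to `y`:
with `u(t) = Bᵀ e^{(T-t)Aᵀ} G_T⁻¹ y` on `[0, T-h]` and `u(t) = B₁ᵀ e^{(T-t)Aᵀ} G_T⁻¹ y`
on `(T-h, T]`, one has `L u = y`, provided the Gramian `G_T` is invertible. -/
theorem delay_steering_control
    {n p : ℕ} (hn : 0 < n) (hp : 0 < p)
    (A : Matrix (Fin n) (Fin n) ℝ) (B₁ B₂ : Matrix (Fin n) (Fin p) ℝ)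
    (h T : ℝ) (hh : 0 < h) (hhT : h < T)
    (B : Matrix (Fin n) (Fin p) ℝ) (hB : B = B₁ + NormedSpace.exp ((-h) • A) * B₂)
    (G : Matrix (Fin n) (Fin n) ℝ)
    (hG : G = (∫ t in (0:ℝ)..(T - h),
          NormedSpace.exp ((T - t) • A) * B * Bᵀ * NormedSpace.exp ((T - t) • Aᵀ))
        + ∫ t in (T - h)..T,
          NormedSpace.exp ((T - t) • A) * B₁ * B₁ᵀ * NormedSpace.exp ((T - t) • Aᵀ))
    (hGunit : IsUnit G)
    (y : Fin n → ℝ) (u : ℝ → Fin p → ℝ)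
    (hu₁ : ∀ t ∈ Set.Icc (0:ℝ) (T - h),
      u t = Bᵀ.mulVec ((NormedSpace.exp ((T - t) • Aᵀ)).mulVec (G⁻¹.mulVec y)))
    (hu₂ : ∀ t ∈ Set.Ioc (T - h) T,
      u t = B₁ᵀ.mulVec ((NormedSpace.exp ((T - t) • Aᵀ)).mulVec (G⁻¹.mulVec y))) :
    (∫ t in (0:ℝ)..(T - h), (NormedSpace.exp ((T - t) • A) * B).mulVec (u t))
      + (∫ t in (T - h)..T, (NormedSpace.exp ((T - t) • A) * B₁).mulVec (u t)) = y :=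
  delay_steering_control_general A B₁ h T hh hhT B G hG hGunit y u hu₁ hu₂
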